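/- Let M, K be positive integers, γ_{mk} ≥ 0 for all m, k, and d_k > 0 for all k. The function F : (ℝ≥0)^{M×K} → ℝ defined by F(η) = min_{1≤k≤K} (Σ_{m=1}^{M} γ_{mk}·√(η_{mk}))² / d_k is concave on (ℝ≥0)^{M×K}. Consequently, maximizing F subject to the affine constraints Σ_{k=1}^{K} η_{mk} γ_{mk} = p_m (m = 1,…,M) and η_{mk} ≥ 0 is a convex optimization problem (maximization of a concave function over a convex set). -/
import Mathlib


open Finset

private lemma cs2 (x y u v : ℝ) (hx : 0 ≤ x) (hy : 0 ≤ y) (hu : 0 ≤ u) (hv : 0 ≤ v) :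
    x * u + y * v ≤ Real.sqrt (x ^ 2 + y ^ 2) * Real.sqrt (u ^ 2 + v ^ 2) := by
  calc x * u + y * v = Real.sqrt ((x * u + y * v) ^ 2) :=
        (Real.sqrt_sq (by positivity)).symm
    _ ≤ Real.sqrt ((x ^ 2 + y ^ 2) * (u ^ 2 + v ^ 2)) := by
        apply Real.sqrt_le_sqrt
        nlinarith [sq_nonneg (x * v - y * u)]
    _ = _ := Real.sqrt_mul (by positivity) _

private lemma key_ineq (M : ℕ) (γ a b : Fin M → ℝ) (hγ : ∀ m, 0 ≤ γ m)
    (ha : ∀ m, 0 ≤ a m) (hb : ∀ m, 0 ≤ b m)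
    (t : ℝ) (ht0 : 0 ≤ t) (ht1 : t ≤ 1) :
    t * (∑ m, γ m * Real.sqrt (a m)) ^ 2 + (1 - t) * (∑ m, γ m * Real.sqrt (b m)) ^ 2
      ≤ (∑ m, γ m * Real.sqrt (t * a m + (1 - t) * b m)) ^ 2 := by
  have ht1' : 0 ≤ 1 - t := by linarith
  set A := ∑ m, γ m * Real.sqrt (a m) with hAdef
  set B := ∑ m, γ m * Real.sqrt (b m) with hBdef
  set C := ∑ m, γ m * Real.sqrt (t * a m + (1 - t) * b m) with hCdef
  have hA : 0 ≤ A := Finset.sum_nonneg fun m _ => mul_nonneg (hγ m) (Real.sqrt_nonneg _)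
  have hB : 0 ≤ B := Finset.sum_nonneg fun m _ => mul_nonneg (hγ m) (Real.sqrt_nonneg _)
  have hC : 0 ≤ C := Finset.sum_nonneg fun m _ => mul_nonneg (hγ m) (Real.sqrt_nonneg _)
  set S := t * A ^ 2 + (1 - t) * B ^ 2 with hSdef
  have hS : 0 ≤ S := add_nonneg (mul_nonneg ht0 (sq_nonneg _)) (mul_nonneg ht1' (sq_nonneg _))
  have hxy : (Real.sqrt t * A) ^ 2 + (Real.sqrt (1 - t) * B) ^ 2 = S := by
    rw [mul_pow, mul_pow, Real.sq_sqrt ht0, Real.sq_sqrt ht1']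
  have main : S ≤ Real.sqrt S * C := by
    have hpt : ∀ m, t * A * Real.sqrt (a m) + (1 - t) * B * Real.sqrt (b m)
        ≤ Real.sqrt S * Real.sqrt (t * a m + (1 - t) * b m) := by
      intro m
      have h := cs2 (Real.sqrt t * A) (Real.sqrt (1 - t) * B)
        (Real.sqrt t * Real.sqrt (a m)) (Real.sqrt (1 - t) * Real.sqrt (b m))
        (mul_nonneg (Real.sqrt_nonneg _) hA) (mul_nonneg (Real.sqrt_nonneg _) hB)
        (mul_nonneg (Real.sqrt_nonneg _) (Real.sqrt_nonneg _))
        (mul_nonneg (Real.sqrt_nonneg _) (Real.sqrt_nonneg _))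
      have huv : (Real.sqrt t * Real.sqrt (a m)) ^ 2 + (Real.sqrt (1 - t) * Real.sqrt (b m)) ^ 2
          = t * a m + (1 - t) * b m := by
        rw [mul_pow, mul_pow, Real.sq_sqrt ht0, Real.sq_sqrt ht1',
          Real.sq_sqrt (ha m), Real.sq_sqrt (hb m)]
      rw [huv, hxy] at h
      have hst : Real.sqrt t * Real.sqrt t = t := Real.mul_self_sqrt ht0
      have hst' : Real.sqrt (1 - t) * Real.sqrt (1 - t) = 1 - t := Real.mul_self_sqrt ht1'
      have ht : Real.sqrt t * A * (Real.sqrt t * Real.sqrt (a m))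
          = t * A * Real.sqrt (a m) := by
        linear_combination A * Real.sqrt (a m) * hst
      have ht' : Real.sqrt (1 - t) * B * (Real.sqrt (1 - t) * Real.sqrt (b m))
          = (1 - t) * B * Real.sqrt (b m) := by
        linear_combination B * Real.sqrt (b m) * hst'
      rw [ht, ht'] at h
      exact h
    have e1 : (∑ m, γ m * (t * A * Real.sqrt (a m))) = t * A * A := by
      have h' : (∑ m, γ m * (t * A * Real.sqrt (a m)))
          = ∑ m, t * A * (γ m * Real.sqrt (a m)) :=
        Finset.sum_congr rfl fun m _ => by ring
      rw [h', ← Finset.mul_sum, ← hAdef]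
    have e2 : (∑ m, γ m * ((1 - t) * B * Real.sqrt (b m))) = (1 - t) * B * B := by
      have h' : (∑ m, γ m * ((1 - t) * B * Real.sqrt (b m)))
          = ∑ m, (1 - t) * B * (γ m * Real.sqrt (b m)) :=
        Finset.sum_congr rfl fun m _ => by ring
      rw [h', ← Finset.mul_sum, ← hBdef]
    have e3 : (∑ m, γ m * (Real.sqrt S * Real.sqrt (t * a m + (1 - t) * b m)))
        = Real.sqrt S * C := by
      have h' : (∑ m, γ m * (Real.sqrt S * Real.sqrt (t * a m + (1 - t) * b m)))
          = ∑ m, Real.sqrt S * (γ m * Real.sqrt (t * a m + (1 - t) * b m)) :=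
        Finset.sum_congr rfl fun m _ => by ring
      rw [h', ← Finset.mul_sum, ← hCdef]
    calc S = ∑ m, γ m * (t * A * Real.sqrt (a m) + (1 - t) * B * Real.sqrt (b m)) := by
          simp only [mul_add]
          rw [Finset.sum_add_distrib, e1, e2, hSdef]; ring
      _ ≤ ∑ m, γ m * (Real.sqrt S * Real.sqrt (t * a m + (1 - t) * b m)) :=
          Finset.sum_le_sum fun m _ => mul_le_mul_of_nonneg_left (hpt m) (hγ m)
      _ = Real.sqrt S * C := e3
  have hsq : Real.sqrt S ^ 2 = S := Real.sq_sqrt hS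
  nlinarith [sq_nonneg (C - Real.sqrt S), main, hsq, Real.sqrt_nonneg S]

/-- The max-min downlink objective `F(η) = min_k (Σ_m γ_{mk}·√η_{mk})²/d_k` is concave
on the nonnegative orthant, and the affine-constraint feasible set
`{η ≥ 0 : Σ_k η_{mk} γ_{mk} = p_m}` is convex; hence maximizing `F` subject to these
constraints is a convex optimization problem. -/
theorem downlink_max_min_concave_convex_problem
    (M K : ℕ) (hM : 0 < M) (hK : 0 < K)
    (γ : Fin M → Fin K → ℝ) (hγ : ∀ m k, 0 ≤ γ m k)
    (d : Fin K → ℝ) (hd : ∀ k, 0 < d k)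
    (F : (Fin M → Fin K → ℝ) → ℝ)
    (hF : ∀ η, F η = ⨅ k : Fin K, (∑ m, γ m k * Real.sqrt (η m k)) ^ 2 / d k) :
    (∀ η η' : Fin M → Fin K → ℝ, (∀ m k, 0 ≤ η m k) → (∀ m k, 0 ≤ η' m k) →
      ∀ t : ℝ, 0 ≤ t → t ≤ 1 →
        t * F η + (1 - t) * F η'
          ≤ F (fun m k => t * η m k + (1 - t) * η' m k)) ∧
    (∀ p : Fin M → ℝ, Convex ℝ {η : Fin M → Fin K → ℝ |
      (∀ m k, 0 ≤ η m k) ∧ ∀ m, (∑ k, η m k * γ m k) = p m}) := by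
  haveI : Nonempty (Fin K) := ⟨⟨0, hK⟩⟩
  constructor
  · intro η η' hη hη' t ht0 ht1
    have ht1' : 0 ≤ 1 - t := by linarith
    set g : (Fin M → Fin K → ℝ) → Fin K → ℝ :=
      fun x k => (∑ m, γ m k * Real.sqrt (x m k)) ^ 2 / d k with hg
    rw [hF, hF, hF]
    apply le_ciInf
    intro k
    have h1 : ⨅ j : Fin K, g η j ≤ g η k :=
      ciInf_le (Set.finite_range _).bddBelow k
    have h2 : ⨅ j : Fin K, g η' j ≤ g η' k :=
      ciInf_le (Set.finite_range _).bddBelow k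
    have hdk := hd k
    have hk : t * (∑ m, γ m k * Real.sqrt (η m k)) ^ 2
        + (1 - t) * (∑ m, γ m k * Real.sqrt (η' m k)) ^ 2
        ≤ (∑ m, γ m k * Real.sqrt (t * η m k + (1 - t) * η' m k)) ^ 2 :=
      key_ineq M (fun m => γ m k) (fun m => η m k) (fun m => η' m k)
        (fun m => hγ m k) (fun m => hη m k) (fun m => hη' m k) t ht0 ht1
    have hmain : t * g η k + (1 - t) * g η' k
        ≤ g (fun m k => t * η m k + (1 - t) * η' m k) k := by
      simp only [hg]
      have e : t * ((∑ m, γ m k * Real.sqrt (η m k)) ^ 2 / d k)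
          + (1 - t) * ((∑ m, γ m k * Real.sqrt (η' m k)) ^ 2 / d k)
          = (t * (∑ m, γ m k * Real.sqrt (η m k)) ^ 2
            + (1 - t) * (∑ m, γ m k * Real.sqrt (η' m k)) ^ 2) / d k := by
        ring
      rw [e, div_le_div_iff₀ hdk hdk]
      nlinarith [hk, hdk]
    calc t * (⨅ j, g η j) + (1 - t) * (⨅ j, g η' j)
        ≤ t * g η k + (1 - t) * g η' k := by gcongr
      _ ≤ _ := hmain
  · intro p
    intro η hη η' hη' a b ha hb hab
    refine ⟨fun m k => ?_, fun m => ?_⟩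
    · have h : (a • η + b • η') m k = a * η m k + b * η' m k := by
        simp [smul_eq_mul]
      rw [h]
      exact add_nonneg (mul_nonneg ha (hη.1 m k)) (mul_nonneg hb (hη'.1 m k))
    · have h1 := hη.2 m
      have h2 := hη'.2 m
      have h : ∀ k, (a • η + b • η') m k * γ m k
          = a * (η m k * γ m k) + b * (η' m k * γ m k) := by
        intro k; simp [smul_eq_mul]; ring
      rw [Finset.sum_congr rfl fun k _ => h k, Finset.sum_add_distrib,
        ← Finset.mul_sum, ← Finset.mul_sum, h1, h2]
      linear_combination p m * hab
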